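/- arXiv:1905.12608 — 2 statements merged into one kernel-verified Lean document; each statement's English description precedes it below -/
import Mathlib

section
/- Let α = (A_g, α_g)_{g∈G} be a partial action of a groupoid G on a ring A. Then α is global if and only if A_g = A_{t(g)} for all g ∈ G. -/
open CategoryTheory

universe u v w

/-- A partial action `α = (A_g, α_g)_{g ∈ G}` of a groupoid `G` on a (not necessarily unital)
ring `A`.  For a morphism `g : a ⟶ b` (source `a`, target `b`), `D g` is the subset `A_g ⊆ A`
and `act g` is the map `α_g`, which restricts to a ring isomorphism `A_{g⁻¹} → A_g`.
Objects are identified with their identity morphisms, so `A_{t(g)} = D (𝟙 b)`. -/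
structure PartialAction (G : Type u) [Groupoid G] (A : Type v) [NonUnitalRing A] where
  /-- the ideal `A_g` -/
  D : ∀ {a b : G}, (a ⟶ b) → Set A
  /-- the map `α_g` (only its restriction to `A_{g⁻¹}` is meaningful) -/
  act : ∀ {a b : G}, (a ⟶ b) → A → A
  zero_mem : ∀ {a b : G} (g : a ⟶ b), (0 : A) ∈ D g
  add_mem : ∀ {a b : G} (g : a ⟶ b), ∀ r ∈ D g, ∀ s ∈ D g, r + s ∈ D g
  neg_mem : ∀ {a b : G} (g : a ⟶ b), ∀ r ∈ D g, -r ∈ D g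
  /-- `A_g ⊆ A_{t(g)}` -/
  subset_target : ∀ {a b : G} (g : a ⟶ b), D g ⊆ D (𝟙 b)
  /-- `A_g` is an ideal of `A_{t(g)}` -/
  ideal_target_left : ∀ {a b : G} (g : a ⟶ b), ∀ r ∈ D (𝟙 b), ∀ s ∈ D g, r * s ∈ D g
  ideal_target_right : ∀ {a b : G} (g : a ⟶ b), ∀ r ∈ D (𝟙 b), ∀ s ∈ D g, s * r ∈ D g
  /-- `A_{t(g)}` is an ideal of `A` -/
  ideal_left : ∀ (b : G) (r : A), ∀ s ∈ D (𝟙 b), r * s ∈ D (𝟙 b)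
  ideal_right : ∀ (b : G) (r : A), ∀ s ∈ D (𝟙 b), s * r ∈ D (𝟙 b)
  /-- `α_g` maps `A_{g⁻¹}` into `A_g` ... -/
  mapsTo : ∀ {a b : G} (g : a ⟶ b), Set.MapsTo (act g) (D (Groupoid.inv g)) (D g)
  /-- ... injectively ... -/
  injOn : ∀ {a b : G} (g : a ⟶ b), Set.InjOn (act g) (D (Groupoid.inv g))
  /-- ... and onto `A_g`, -/
  surjOn : ∀ {a b : G} (g : a ⟶ b), Set.SurjOn (act g) (D (Groupoid.inv g)) (D g)
  /-- additively ... -/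
  act_add : ∀ {a b : G} (g : a ⟶ b), ∀ r ∈ D (Groupoid.inv g), ∀ s ∈ D (Groupoid.inv g),
    act g (r + s) = act g r + act g s
  /-- ... and multiplicatively, i.e. `α_g : A_{g⁻¹} → A_g` is a ring isomorphism. -/
  act_mul : ∀ {a b : G} (g : a ⟶ b), ∀ r ∈ D (Groupoid.inv g), ∀ s ∈ D (Groupoid.inv g),
    act g (r * s) = act g r * act g s
  /-- `α_x = id_{A_x}` for every object `x` -/
  act_id : ∀ (b : G), ∀ r ∈ D (𝟙 b), act (𝟙 b) r = r
  /-- `α_h⁻¹(A_{g⁻¹} ∩ A_h) ⊆ A_{(gh)⁻¹}` for composable `g, h`  -/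
  compat_mem : ∀ {a b c : G} (h : a ⟶ b) (g : b ⟶ c), ∀ r ∈ D (Groupoid.inv h),
    act h r ∈ D (Groupoid.inv g) → r ∈ D (Groupoid.inv (h ≫ g))
  /-- `α_{gh}(a) = α_g (α_h a)` on `α_h⁻¹(A_{g⁻¹} ∩ A_h)`, i.e. `α_g ∘ α_h ≤ α_{gh}` -/
  compat_act : ∀ {a b c : G} (h : a ⟶ b) (g : b ⟶ c), ∀ r ∈ D (Groupoid.inv h),
    act h r ∈ D (Groupoid.inv g) → act (h ≫ g) r = act g (act h r)

/-- A partial action is *global* if `α_g ∘ α_h = α_{gh}` (equality of partially defined maps: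
the domain `α_h⁻¹(A_{g⁻¹} ∩ A_h)` of `α_g ∘ α_h` coincides with `A_{(gh)⁻¹}`) for all
composable `g, h`. -/
def PartialAction.IsGlobal {G : Type u} [Groupoid G] {A : Type v} [NonUnitalRing A]
    (α : PartialAction G A) : Prop :=
  ∀ {a b c : G} (h : a ⟶ b) (g : b ⟶ c),
    (∀ r : A, r ∈ α.D (Groupoid.inv (h ≫ g)) ↔
      r ∈ α.D (Groupoid.inv h) ∧ α.act h r ∈ α.D (Groupoid.inv g)) ∧
    ∀ r ∈ α.D (Groupoid.inv (h ≫ g)), α.act (h ≫ g) r = α.act g (α.act h r)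

namespace PartialAction

variable {G : Type u} [Groupoid G] {A : Type v} [NonUnitalRing A]

-- `compat_mem` and `compat_act` supply the other inclusion and the agreement of the maps.
theorem isGlobal_iff_D_inv_comp_subset (α : PartialAction G A) :
    α.IsGlobal ↔ ∀ {a b c : G} (h : a ⟶ b) (g : b ⟶ c), ∀ r ∈ α.D (Groupoid.inv (h ≫ g)),
      r ∈ α.D (Groupoid.inv h) ∧ α.act h r ∈ α.D (Groupoid.inv g) := by
  refine ⟨fun hα _ _ _ h g r hr => ((hα h g).1 r).1 hr, fun hdom _ _ _ h g => ⟨?_, ?_⟩⟩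
  · exact fun r => ⟨hdom h g r, fun ⟨hr, hhr⟩ => α.compat_mem h g r hr hhr⟩
  · exact fun r hr => α.compat_act h g r (hdom h g r hr).1 (hdom h g r hr).2

theorem IsGlobal.D_eq_target {α : PartialAction G A} (hα : α.IsGlobal) {a b : G} (g : a ⟶ b) :
    α.D g = α.D (𝟙 b) := by
  -- globality at the composable pair `(g⁻¹, g)`, whose composite is `𝟙 b`
  refine (α.subset_target g).antisymm fun r hr => ?_
  have hr' : r ∈ α.D (Groupoid.inv (Groupoid.inv g ≫ g)) := by simpa using hr
  simpa using (α.isGlobal_iff_D_inv_comp_subset.mp hα (Groupoid.inv g) g r hr').1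

theorem isGlobal_of_D_eq_target {α : PartialAction G A}
    (hD : ∀ {a b : G} (g : a ⟶ b), α.D g = α.D (𝟙 b)) : α.IsGlobal := by
  refine α.isGlobal_iff_D_inv_comp_subset.mpr fun h g r hr => ?_
  have hr' : r ∈ α.D (Groupoid.inv h) := by rwa [hD, ← hD (Groupoid.inv (h ≫ g))]
  refine ⟨hr', ?_⟩
  rw [hD, ← hD h]
  exact α.mapsTo h hr'

end PartialAction

/-- **Lemma 1.1(i) (Bagio–Paques).** A partial action `α` of a groupoid `G` on a ring `A`
is global if and only if `A_g = A_{t(g)}` for every morphism `g` of `G`. -/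
theorem partialAction_isGlobal_iff_D_eq_target {G : Type u} [Groupoid G] {A : Type v}
    [NonUnitalRing A] (α : PartialAction G A) :
    α.IsGlobal ↔ ∀ {a b : G} (g : a ⟶ b), α.D g = α.D (𝟙 b) :=
  ⟨fun hα _ _ g => hα.D_eq_target g, PartialAction.isGlobal_of_D_eq_target⟩
end

section
/- Let G be a connected groupoid and α = (A_g, α_g)_{g∈G} a partial action of G on a ring A that is group-type with respect to a transversal τ(x) = {τ_y : x → y | y ∈ G₀} for an object x. Then for any object z of G, the family τ̃(z) = {τ̃_y := τ_y τ_z⁻¹ | y ∈ G₀} is a transversal for z (in particular τ̃_z = id_z), and α is group-type with respect to τ̃(z), i.e. A_{(τ̃_y)⁻¹} = A_z and A_{τ̃_y} = A_y for all y ∈ G₀. -/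
open CategoryTheory

universe u v w

/-! Since every `A_{τ_y⁻¹}` is the same ideal `A_x`, the map `α_{τ_y⁻¹}` sends `A_{τ_y} = A_y`
into `A_{τ_z⁻¹}`, so the compatibility axiom of a partial action gives
`A_y ⊆ A_{(τ_y⁻¹ ≫ τ_z)⁻¹} = A_{τ_z⁻¹ ≫ τ_y} ⊆ A_y`. Exchanging `y` and `z` gives the source
condition. -/

namespace PartialAction

variable {G : Type u} [Groupoid G] {A : Type v} [NonUnitalRing A] (α : PartialAction G A)

theorem D_inv_subset_D_inv_comp {a b c : G} (h : a ⟶ b) (g : b ⟶ c)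
    (hsub : α.D h ⊆ α.D (Groupoid.inv g)) :
    α.D (Groupoid.inv h) ⊆ α.D (Groupoid.inv (h ≫ g)) :=
  fun r hr => α.compat_mem h g r hr (hsub (α.mapsTo h hr))

theorem D_inv_comp_eq_of_groupType {x : G} (τ : ∀ y : G, x ⟶ y)
    (hsrc : ∀ y : G, α.D (Groupoid.inv (τ y)) = α.D (𝟙 x))
    (htgt : ∀ y : G, α.D (τ y) = α.D (𝟙 y)) (z y : G) :
    α.D (Groupoid.inv (τ z) ≫ τ y) = α.D (𝟙 y) := by
  refine (α.subset_target _).antisymm ?_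
  have hsub : α.D (Groupoid.inv (τ y)) ⊆ α.D (Groupoid.inv (τ z)) := by rw [hsrc, hsrc]
  have := α.D_inv_subset_D_inv_comp (Groupoid.inv (τ y)) (τ z) hsub
  simpa only [Groupoid.inv_eq_inv, IsIso.inv_inv, IsIso.inv_comp, htgt] using this

end PartialAction

theorem partialAction_groupType_base_change_general {G : Type u} [Groupoid G] {A : Type v}
    [NonUnitalRing A] (α : PartialAction G A)
    (x : G) (τ : ∀ y : G, x ⟶ y)
    (hsrc : ∀ y : G, α.D (Groupoid.inv (τ y)) = α.D (𝟙 x))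
    (htgt : ∀ y : G, α.D (τ y) = α.D (𝟙 y))
    (z : G) :
    (Groupoid.inv (τ z) ≫ τ z = 𝟙 z) ∧
    (∀ y : G, α.D (Groupoid.inv (Groupoid.inv (τ z) ≫ τ y)) = α.D (𝟙 z)) ∧
    (∀ y : G, α.D (Groupoid.inv (τ z) ≫ τ y) = α.D (𝟙 y)) := by
  have hD := α.D_inv_comp_eq_of_groupType τ hsrc htgt
  refine ⟨Groupoid.inv_comp (τ z), fun y => ?_, hD z⟩
  have hinv : Groupoid.inv (Groupoid.inv (τ z) ≫ τ y) = Groupoid.inv (τ y) ≫ τ z := by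
    simp only [Groupoid.inv_eq_inv, IsIso.inv_comp, IsIso.inv_inv]
  rw [hinv, hD y z]

/-- **Independence of the base object for group-type partial actions.**
Let `G` be a connected groupoid and `α` a partial action of `G` on a ring `A` which is
group-type with respect to a transversal `τ(x) = {τ_y : x ⟶ y}` for the object `x`
(so `τ_x = 𝟙 x`, `A_{τ_y⁻¹} = A_x` and `A_{τ_y} = A_y` for all objects `y`).  Then for any
object `z`, the family `τ̃_y := τ_y ∘ τ_z⁻¹` (in Lean: `Groupoid.inv (τ z) ≫ τ y : z ⟶ y`)
is a transversal for `z` (in particular `τ̃_z = 𝟙 z`), and `α` is group-type with respect to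
it: `A_{(τ̃_y)⁻¹} = A_z` and `A_{τ̃_y} = A_y` for all `y`. -/
theorem partialAction_groupType_base_change {G : Type u} [Groupoid G] {A : Type v}
    [NonUnitalRing A] (α : PartialAction G A)
    (hconn : ∀ a b : G, Nonempty (a ⟶ b))
    (x : G) (τ : ∀ y : G, x ⟶ y) (hτx : τ x = 𝟙 x)
    (hsrc : ∀ y : G, α.D (Groupoid.inv (τ y)) = α.D (𝟙 x))
    (htgt : ∀ y : G, α.D (τ y) = α.D (𝟙 y))
    (z : G) :
    (Groupoid.inv (τ z) ≫ τ z = 𝟙 z) ∧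
    (∀ y : G, α.D (Groupoid.inv (Groupoid.inv (τ z) ≫ τ y)) = α.D (𝟙 z)) ∧
    (∀ y : G, α.D (Groupoid.inv (τ z) ≫ τ y) = α.D (𝟙 y)) :=
  partialAction_groupType_base_change_general α x τ hsrc htgt z
end
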